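/- arXiv:1608.05495 — 3 statements merged into one kernel-verified Lean document; each statement's English description precedes it below -/
import Mathlib

section
/- For any connected graph G, sdim_f(G) ≤ min{ |M(G)|/2, sdim(G) }. -/
open SimpleGraph

/-- `Sset G x y` is the set `S{x,y}` of vertices `z` such that `x` lies on some shortest
`y`–`z` path or `y` lies on some shortest `x`–`z` path in `G`. -/
def Sset {V : Type*} (G : SimpleGraph V) (x y : V) : Set V :=
  {z | (∃ p : G.Walk y z, p.length = G.dist y z ∧ x ∈ p.support) ∨
       (∃ p : G.Walk x z, p.length = G.dist x z ∧ y ∈ p.support)}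

/-- A strong resolving function of `G`: `g : V → [0,1]` with `g(S{x,y}) ≥ 1` for all
distinct vertices `x, y`. -/
def IsSRF {V : Type*} (G : SimpleGraph V) (g : V → ℝ) : Prop :=
  (∀ v, 0 ≤ g v ∧ g v ≤ 1) ∧ ∀ x y : V, x ≠ y → 1 ≤ ∑ᶠ z ∈ Sset G x y, g z

/-- The fractional strong metric dimension of `G`. -/
noncomputable def sdimf {V : Type*} (G : SimpleGraph V) : ℝ :=
  sInf {s : ℝ | ∃ g : V → ℝ, IsSRF G g ∧ s = ∑ᶠ v, g v}

/-- A strong resolving set of `G`: every pair of distinct vertices is strongly resolved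
by some vertex of `S` (i.e. some vertex of `S` lies in `S{x,y}`). -/
def IsSRSet {V : Type*} (G : SimpleGraph V) (S : Set V) : Prop :=
  ∀ x y : V, x ≠ y → ∃ z ∈ S, z ∈ Sset G x y

/-- The strong metric dimension of `G`: the minimum cardinality of a strong resolving set. -/
noncomputable def sdim {V : Type*} (G : SimpleGraph V) : ℕ :=
  sInf {n : ℕ | ∃ S : Set V, IsSRSet G S ∧ S.ncard = n}

/-- `u` is maximally distant from `v`: `d(u,v) ≥ d(w,v)` for every neighbor `w` of `u`. -/
def MaxDistFrom {V : Type*} (G : SimpleGraph V) (u v : V) : Prop :=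
  ∀ w : V, G.Adj u w → G.dist w v ≤ G.dist u v

/-- `u` and `v` are mutually maximally distant (MMD) in `G`. -/
def MMD {V : Type*} (G : SimpleGraph V) (u v : V) : Prop :=
  u ≠ v ∧ MaxDistFrom G u v ∧ MaxDistFrom G v u

/-- The strong resolving graph of `G` (on the ambient vertex set): `u ~ v` iff `u` MMD `v`. -/
def SRGraph {V : Type*} (G : SimpleGraph V) : SimpleGraph V where
  Adj := MMD G
  symm := ⟨fun _ _ h => ⟨h.1.symm, h.2.2, h.2.1⟩⟩
  loopless := ⟨fun _ h => h.1 rfl⟩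

/-- `M(G)`: the set of vertices that are mutually maximally distant with some vertex. -/
def Mset {V : Type*} (G : SimpleGraph V) : Set V := {x | ∃ y, MMD G x y}

/-- The matching number of `G`. -/
noncomputable def matchNum {V : Type*} (G : SimpleGraph V) : ℕ :=
  sSup {n : ℕ | ∃ M : G.Subgraph, M.IsMatching ∧ M.edgeSet.ncard = n}

/-- The corona product `G ⊙ H`. -/
def corona {V W : Type*} (G : SimpleGraph V) (H : SimpleGraph W) :
    SimpleGraph (V ⊕ V × W) where
  Adj x y :=
    match x, y with
    | Sum.inl u, Sum.inl u' => G.Adj u u'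
    | Sum.inl u, Sum.inr iw => u = iw.1
    | Sum.inr iw, Sum.inl u => iw.1 = u
    | Sum.inr iw, Sum.inr iw' => iw.1 = iw'.1 ∧ H.Adj iw.2 iw'.2
  symm := by
    constructor
    rintro (u | iw) (u' | iw') h
    · exact G.symm.symm _ _ h
    · exact h.symm
    · exact h.symm
    · exact ⟨h.1.symm, H.symm.symm _ _ h.2⟩
  loopless := by
    constructor
    rintro (u | iw) h
    · exact G.loopless.irrefl u h
    · exact H.loopless.irrefl iw.2 h.2

/-- `K₁ ⊙ H`: the graph obtained from `H` by adding one new vertex adjacent to every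
vertex of `H`. -/
def cone {W : Type*} (H : SimpleGraph W) : SimpleGraph (Option W) where
  Adj x y :=
    match x, y with
    | none, none => False
    | none, some _ => True
    | some _, none => True
    | some w, some w' => H.Adj w w'
  symm := by
    constructor
    rintro (_ | w) (_ | w') h
    · exact h
    · exact trivial
    · exact trivial
    · exact H.symm.symm _ _ h
  loopless := by
    constructor
    rintro (_ | w) h
    · exact h
    · exact H.loopless.irrefl w h

/-- The lexicographic product `G[H]`. -/
def lexProd {V W : Type*} (G : SimpleGraph V) (H : SimpleGraph W) :
    SimpleGraph (V × W) where
  Adj x y := G.Adj x.1 y.1 ∨ (x.1 = y.1 ∧ H.Adj x.2 y.2)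
  symm := by
    constructor
    rintro x y (h | ⟨h1, h2⟩)
    · exact Or.inl (G.symm.symm _ _ h)
    · exact Or.inr ⟨h1.symm, H.symm.symm _ _ h2⟩
  loopless := by
    constructor
    rintro x (h | ⟨_, h2⟩)
    · exact G.loopless.irrefl x.1 h
    · exact H.loopless.irrefl x.2 h2

/-- `SL{x,y} = (N[x] ∪ N[y]) ∩ S{x,y}`. -/
def SLset {W : Type*} (H : SimpleGraph W) (x y : W) : Set W :=
  (insert x (H.neighborSet x) ∪ insert y (H.neighborSet y)) ∩ Sset H x y

/-- A strong locating function of `H`. -/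
def IsSLF {W : Type*} (H : SimpleGraph W) (f : W → ℝ) : Prop :=
  (∀ v, 0 ≤ f v ∧ f v ≤ 1) ∧ ∀ x y : W, x ≠ y → 1 ≤ ∑ᶠ z ∈ SLset H x y, f z

/-- `sl_f(H)`: the minimum weight of a strong locating function of `H`. -/
noncomputable def slf {W : Type*} (H : SimpleGraph W) : ℝ :=
  sInf {s : ℝ | ∃ f : W → ℝ, IsSLF H f ∧ s = ∑ᶠ v, f v}

/-- `u` has a true twin: some other vertex with the same closed neighborhood. -/
def HasTrueTwin {V : Type*} (G : SimpleGraph V) (u : V) : Prop :=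
  ∃ v : V, v ≠ u ∧ insert v (G.neighborSet v) = insert u (G.neighborSet u)

/-- `u` has a false twin: some other vertex with the same open neighborhood. -/
def HasFalseTwin {V : Type*} (G : SimpleGraph V) (u : V) : Prop :=
  ∃ v : V, v ≠ u ∧ G.neighborSet v = G.neighborSet u

/-- `m₁(G)`: number of vertices in type-1 (singleton) classes of the twin relation. -/
noncomputable def m1 {V : Type*} (G : SimpleGraph V) : ℕ :=
  {u : V | ¬ HasTrueTwin G u ∧ ¬ HasFalseTwin G u}.ncard

/-- `m₂(G)`: number of vertices in type-2 (clique) classes of the twin relation. -/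
noncomputable def m2 {V : Type*} (G : SimpleGraph V) : ℕ :=
  {u : V | HasTrueTwin G u}.ncard

/-- `m₃(G)`: number of vertices in type-3 (independent set) classes of the twin relation. -/
noncomputable def m3 {V : Type*} (G : SimpleGraph V) : ℕ :=
  {u : V | HasFalseTwin G u}.ncard

/-- The strong resolving graph of `G` (whose vertex set is `M(G)`) is Hamiltonian:
there is a cycle in `SRGraph G` passing through every vertex of `M(G)`. -/
def SRHamiltonian {V : Type*} (G : SimpleGraph V) : Prop :=
  ∃ (u : V) (p : (SRGraph G).Walk u u), p.IsCycle ∧ ∀ v ∈ Mset G, v ∈ p.support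

/-! For `x ≠ y`, walk away from `y` through `x` until a vertex `u` maximally distant from `y` is
reached, then away from `u` through `y` until a vertex `v` maximally distant from `u` is reached:
`u` and `v` are mutually maximally distant and `u ∈ S{x,y}`. Doing the same with `x` and `y`
swapped gives a second vertex of `M(G) ∩ S{x,y}`, so the weight `1/2` on `M(G)` is a strong
resolving function. The indicator of a strong resolving set is one as well. -/

lemma finsum_mem_indicator_const {α : Type*} {S T : Set α} (h : (S ∩ T).Finite) (c : ℝ) :
    ∑ᶠ z ∈ T, S.indicator (fun _ => c) z = c * (S ∩ T).ncard := by
  rw [finsum_mem_def, Set.indicator_indicator, ← finsum_mem_def, Set.inter_comm,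
    finsum_mem_eq_finite_toFinset_sum _ h, Finset.sum_const, Set.ncard_eq_toFinset_card _ h,
    nsmul_eq_mul, mul_comm]

namespace SimpleGraph

variable {V : Type*} {G : SimpleGraph V} {x y u : V}

lemma mem_Sset_comm : u ∈ Sset G x y ↔ u ∈ Sset G y x :=
  or_comm

lemma right_mem_Sset (h : G.Reachable x y) : y ∈ Sset G x y := by
  obtain ⟨p, hp⟩ := h.exists_walk_length_eq_dist
  exact Or.inr ⟨p, hp, p.end_mem_support⟩

lemma mem_Sset_of_dist_eq_add (hG : G.Connected)
    (h : G.dist y u = G.dist y x + G.dist x u) : u ∈ Sset G x y := by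
  obtain ⟨p, hp⟩ := hG.exists_walk_length_eq_dist y x
  obtain ⟨q, hq⟩ := hG.exists_walk_length_eq_dist x u
  refine Or.inl ⟨p.append q, ?_, (p.mem_support_append_iff q).mpr (Or.inl p.end_mem_support)⟩
  rw [Walk.length_append, hp, hq, h]

/-- Among the vertices `u` with `x` on a geodesic from `y` to `u`, one farthest from `y` is
maximally distant from `y`: a neighbour farther from `y` would still have `x` on a geodesic. -/
lemma Connected.exists_maxDistFrom_beyond [Finite V] (hG : G.Connected) (x y : V) :
    ∃ u, MaxDistFrom G u y ∧ G.dist y u = G.dist y x + G.dist x u := by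
  obtain ⟨u, hu, hmax⟩ := Set.exists_max_image
    {u | G.dist y u = G.dist y x + G.dist x u} (G.dist y) (Set.toFinite _) ⟨x, by simp⟩
  replace hu : G.dist y u = G.dist y x + G.dist x u := hu
  refine ⟨u, fun w hw => ?_, hu⟩
  by_contra! hfar
  have hwu : G.dist u w = 1 := dist_eq_one_iff_adj.mpr hw
  have hyw : G.dist y w ≤ G.dist y u + G.dist u w := hG.dist_triangle
  have hxw : G.dist x w ≤ G.dist x u + G.dist u w := hG.dist_triangle
  have hyxw : G.dist y w ≤ G.dist y x + G.dist x w := hG.dist_triangle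
  rw [dist_comm (u := w), dist_comm (u := u)] at hfar
  have := hmax w (show G.dist y w = G.dist y x + G.dist x w by omega)
  omega

lemma Connected.exists_mem_Mset_beyond [Finite V] (hG : G.Connected) (hxy : x ≠ y) :
    ∃ u ∈ Mset G, G.dist y u = G.dist y x + G.dist x u := by
  obtain ⟨u, hu, hyu⟩ := hG.exists_maxDistFrom_beyond x y
  obtain ⟨v, hv, huv⟩ := hG.exists_maxDistFrom_beyond y u
  have hne : u ≠ v := by
    rintro rfl
    have : G.dist y x = 0 := by rw [dist_self] at huv; rw [dist_comm] at hyu; omega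
    exact hxy (hG.dist_eq_zero_iff.mp this).symm
  refine ⟨u, ⟨v, hne, fun w hw => ?_, hv⟩, hyu⟩
  have hwv : G.dist w v ≤ G.dist w y + G.dist y v := hG.dist_triangle
  have hwy : G.dist w y ≤ G.dist u y := hu w hw
  omega

lemma Connected.two_le_ncard_Mset_inter_Sset [Finite V] (hG : G.Connected) (hxy : x ≠ y) :
    2 ≤ (Mset G ∩ Sset G x y).ncard := by
  obtain ⟨u, hu, hyu⟩ := hG.exists_mem_Mset_beyond hxy
  obtain ⟨v, hv, hxv⟩ := hG.exists_mem_Mset_beyond hxy.symm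
  have hne : u ≠ v := by
    rintro rfl
    have := hG.pos_dist_of_ne hxy
    rw [dist_comm (u := y) (v := x)] at hyu
    omega
  exact (Set.one_lt_ncard (Set.toFinite _)).mpr ⟨u, ⟨hu, mem_Sset_of_dist_eq_add hG hyu⟩,
    v, ⟨hv, mem_Sset_comm.mpr (mem_Sset_of_dist_eq_add hG hxv)⟩, hne⟩

lemma sdimf_le_finsum {g : V → ℝ} (hg : IsSRF G g) : sdimf G ≤ ∑ᶠ v, g v :=
  csInf_le ⟨0, by rintro s ⟨g, hg, rfl⟩; exact finsum_nonneg fun v => (hg.1 v).1⟩ ⟨g, hg, rfl⟩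

lemma sdimf_le_mul_ncard [Finite V] {S : Set V} {c : ℝ} (hc0 : 0 ≤ c) (hc1 : c ≤ 1)
    (hS : ∀ x y, x ≠ y → 1 ≤ c * (S ∩ Sset G x y).ncard) : sdimf G ≤ c * S.ncard := by
  have hg : IsSRF G (S.indicator fun _ => c) := by
    refine ⟨fun v => ⟨Set.indicator_nonneg (fun _ _ => hc0) v, ?_⟩, fun x y hxy => ?_⟩
    · exact Set.indicator_apply_le' (fun _ => hc1) (fun _ => zero_le_one)
    · rw [finsum_mem_indicator_const (Set.toFinite _)]
      exact hS x y hxy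
  calc sdimf G ≤ ∑ᶠ v, S.indicator (fun _ => c) v := sdimf_le_finsum hg
    _ = c * S.ncard := by
      rw [← finsum_mem_univ, finsum_mem_indicator_const (Set.toFinite _), Set.inter_univ]

lemma Connected.sdimf_le_ncard_Mset_div_two [Finite V] (hG : G.Connected) :
    sdimf G ≤ (Mset G).ncard / 2 := by
  rw [div_eq_inv_mul]
  refine sdimf_le_mul_ncard (by norm_num) (by norm_num) fun x y hxy => ?_
  have : (2 : ℝ) ≤ (Mset G ∩ Sset G x y).ncard := by
    exact_mod_cast hG.two_le_ncard_Mset_inter_Sset hxy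
  linarith

lemma sdimf_le_ncard_of_isSRSet [Finite V] {S : Set V} (hS : IsSRSet G S) :
    sdimf G ≤ S.ncard := by
  rw [← one_mul (S.ncard : ℝ)]
  refine sdimf_le_mul_ncard zero_le_one le_rfl fun x y hxy => ?_
  obtain ⟨z, hz⟩ := hS x y hxy
  rw [one_mul, Nat.one_le_cast]
  exact (Set.ncard_pos (Set.toFinite _)).mpr ⟨z, hz⟩

lemma Connected.exists_isSRSet_ncard_eq_sdim (hG : G.Connected) :
    ∃ S, IsSRSet G S ∧ S.ncard = sdim G :=
  Nat.sInf_mem (s := {n | ∃ S, IsSRSet G S ∧ S.ncard = n})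
    ⟨_, Set.univ, fun x y _ => ⟨y, trivial, right_mem_Sset (hG x y)⟩, rfl⟩

end SimpleGraph

/-- For any connected graph `G`,
`sdim_f(G) ≤ min{ |M(G)|/2, sdim(G) }`. -/
theorem sdimf_le_min_half_Mset_sdim {V : Type*} [Fintype V] (G : SimpleGraph V)
    (hG : G.Connected) :
    sdimf G ≤ min (((Mset G).ncard : ℝ) / 2) (sdim G : ℝ) := by
  obtain ⟨S, hS, hcard⟩ := hG.exists_isSRSet_ncard_eq_sdim
  exact le_min hG.sdimf_le_ncard_Mset_div_two (hcard ▸ sdimf_le_ncard_of_isSRSet hS)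
end

section
/- Let G be a connected graph of order n ≥ 2. Then (a) sdim_f(G[K_m]) = nm/2 for every m ≥ 2, where K_m is the complete graph on m vertices; (b) sdim_f(G[C_m]) = nm/2 for every m ≥ 3, where C_m is the cycle on m vertices; and (c) sdim_f(G[P_m]) = nm/2 for every m ≥ 2 with m ≠ 3, where P_m is the path on m vertices. -/
open SimpleGraph

/-! If every vertex `x` is mutually maximally distant from its image under a fixed-point-free
permutation `σ`, then `S{x, σ x} = {x, σ x}`, so a strong resolving function `g` satisfies
`g x + g (σ x) ≥ 1`; summing over `x` gives `2 g(V) ≥ |V|`. Since `x, y ∈ S{x, y}` in a connected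
graph, the constant function `1/2` attains this bound.

In `G[H]`, when the vertex `u` of `G` has a neighbour `u₀`, two vertices `(u, i)` and `(u, j)` are
mutually maximally distant as soon as `i` and `j` are nonadjacent (their distance is then `2`,
through `(u₀, j)`) or true twins in `H`. Such permutations exist for `K_m` (`k ↦ k + 1`) and for
`C_m`, `P_m` with `m ≥ 4` (`k ↦ k + 2`), while `C_3 = K_3` and `P_2 = K_2`. -/

section StrongResolving

variable {α : Type*} {L : SimpleGraph α}

lemma finsum_mem_mono_of_nonneg [Finite α] {f : α → ℝ} (hf : ∀ a, 0 ≤ f a) {s t : Set α}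
    (hst : s ⊆ t) : ∑ᶠ a ∈ s, f a ≤ ∑ᶠ a ∈ t, f a := by
  simp only [finsum_mem_def]
  exact finsum_le_finsum' (Set.toFinite _) (Set.toFinite _)
    (Set.indicator_le_indicator_of_subset hst hf)

lemma eq_of_maxDistFrom_of_mem_support {x y z : α} (hx : MaxDistFrom L x y) (p : L.Walk y z)
    (hp : p.length = L.dist y z) (hxp : x ∈ p.support) : z = x := by
  classical
  -- the successor `w` of `x` on `p` is no farther from `y` than `x`, so `p` could be shortened
  by_contra hzx
  obtain ⟨w, hxw, r, hr⟩ := (p.dropUntil x hxp).exists_eq_cons_of_ne (Ne.symm hzx)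
  have hsplit := congrArg Walk.length (p.take_spec hxp)
  rw [Walk.length_append, hr, Walk.length_cons] at hsplit
  set q := p.takeUntil x hxp
  obtain ⟨s, hs⟩ := (q.concat hxw).reachable.exists_walk_length_eq_dist
  have hwy : L.dist y w ≤ q.length :=
    calc L.dist y w = L.dist w y := dist_comm
      _ ≤ L.dist x y := hx w hxw
      _ = L.dist y x := dist_comm
      _ ≤ q.length := dist_le q
  have := dist_le (s.append r)
  rw [Walk.length_append] at this
  omega

lemma pair_subset_sset (hL : L.Preconnected) (x y : α) : {x, y} ⊆ Sset L x y := by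
  rintro z (rfl | rfl)
  · obtain ⟨p, hp⟩ := (hL y z).exists_walk_length_eq_dist
    exact Or.inl ⟨p, hp, p.end_mem_support⟩
  · obtain ⟨p, hp⟩ := (hL x z).exists_walk_length_eq_dist
    exact Or.inr ⟨p, hp, p.end_mem_support⟩

lemma MMD.sset_subset_pair {x y : α} (h : MMD L x y) : Sset L x y ⊆ {x, y} := by
  rintro z (⟨p, hp, hx⟩ | ⟨p, hp, hy⟩)
  · exact Or.inl (eq_of_maxDistFrom_of_mem_support h.2.1 p hp hx)
  · exact Or.inr (eq_of_maxDistFrom_of_mem_support h.2.2 p hp hy)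

lemma isSRF_const_half [Finite α] (hL : L.Preconnected) : IsSRF L fun _ => 1 / 2 := by
  refine ⟨fun _ => by norm_num, fun x y hxy => ?_⟩
  calc (1 : ℝ) = ∑ᶠ z ∈ ({x, y} : Set α), (1 / 2 : ℝ) := by
        rw [finsum_mem_pair hxy]; norm_num
    _ ≤ ∑ᶠ z ∈ Sset L x y, (1 / 2 : ℝ) :=
        finsum_mem_mono_of_nonneg (fun _ => by norm_num) (pair_subset_sset hL x y)

lemma IsSRF.card_div_two_le_finsum [Fintype α] {g : α → ℝ} (hg : IsSRF L g) (σ : Equiv.Perm α)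
    (hσ : ∀ x, MMD L x (σ x)) : (Fintype.card α : ℝ) / 2 ≤ ∑ᶠ x, g x := by
  have hpair (x : α) : 1 ≤ g x + g (σ x) :=
    calc 1 ≤ ∑ᶠ z ∈ Sset L x (σ x), g z := hg.2 x (σ x) (hσ x).1
      _ ≤ ∑ᶠ z ∈ ({x, σ x} : Set α), g z :=
        finsum_mem_mono_of_nonneg (fun v => (hg.1 v).1) (hσ x).sset_subset_pair
      _ = g x + g (σ x) := finsum_mem_pair (hσ x).1
  have hsum : (Fintype.card α : ℝ) ≤ 2 * ∑ x, g x :=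
    calc (Fintype.card α : ℝ) = ∑ _x : α, (1 : ℝ) := by simp
      _ ≤ ∑ x, (g x + g (σ x)) := Finset.sum_le_sum fun x _ => hpair x
      _ = 2 * ∑ x, g x := by rw [Finset.sum_add_distrib, Equiv.sum_comp σ g]; ring
  rw [finsum_eq_sum_of_fintype]
  linarith

theorem sdimf_eq_card_div_two [Fintype α] (hL : L.Preconnected) (σ : Equiv.Perm α)
    (hσ : ∀ x, MMD L x (σ x)) : sdimf L = Fintype.card α / 2 := by
  have hhalf : (Fintype.card α : ℝ) / 2 ∈ {s | ∃ g : α → ℝ, IsSRF L g ∧ s = ∑ᶠ v, g v} :=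
    ⟨_, isSRF_const_half hL, by simp [finsum_eq_sum_of_fintype, div_eq_mul_inv]⟩
  have hlower : ∀ s ∈ {s | ∃ g : α → ℝ, IsSRF L g ∧ s = ∑ᶠ v, g v}, Fintype.card α / 2 ≤ s := by
    rintro s ⟨g, hg, rfl⟩
    exact hg.card_div_two_le_finsum σ hσ
  exact le_antisymm (csInf_le ⟨_, hlower⟩ hhalf) (le_csInf ⟨_, hhalf⟩ hlower)

end StrongResolving

section LexProd

variable {V W : Type*} {G : SimpleGraph V} {H : SimpleGraph W}

lemma lexProd_preconnected (hG : G.Preconnected) (hadj : ∀ u, ∃ w, G.Adj u w) :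
    (lexProd G H).Preconnected := by
  rintro ⟨u, i⟩ ⟨u', k⟩
  obtain ⟨w, huw⟩ := hadj u
  let layer : G →g lexProd G H := ⟨fun v => (v, k), Or.inl⟩
  have hfiber : (lexProd G H).Reachable (u, i) (u, k) :=
    ⟨.cons (v := (w, k)) (Or.inl huw) (.cons (Or.inl huw.symm) .nil)⟩
  exact hfiber.trans ((hG u u').map layer)

lemma maxDistFrom_lexProd {u u₀ : V} (hu : G.Adj u u₀) {i j : W} (hij : i ≠ j)
    (hH : ¬ H.Adj i j ∨ insert i (H.neighborSet i) = insert j (H.neighborSet j)) :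
    MaxDistFrom (lexProd G H) (u, i) (u, j) := by
  have hreach : (lexProd G H).Reachable (u, i) (u, j) :=
    ⟨.cons (v := (u₀, j)) (Or.inl hu) (.cons (Or.inl hu.symm) .nil)⟩
  have hne : ((u, i) : V × W) ≠ (u, j) := fun h => hij (congrArg Prod.snd h)
  have hpos : 1 ≤ (lexProd G H).dist (u, i) (u, j) := hreach.pos_dist_of_ne hne
  rintro ⟨w, l⟩ (hw | ⟨rfl, hl⟩)
  · have hwj : (lexProd G H).Adj (w, l) (u, j) := Or.inl hw.symm
    exact (dist_eq_one_iff_adj.mpr hwj).le.trans hpos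
  rcases hH with hnadj | htwin
  · have hnadj' : ¬ (lexProd G H).Adj (u, i) (u, j) := by
      rintro (h | ⟨-, h⟩)
      exacts [G.loopless.irrefl u h, hnadj h]
    have hlj : (lexProd G H).dist (u, l) (u, j) ≤ 2 := by
      let p : (lexProd G H).Walk (u, l) (u, j) :=
        .cons (v := (u₀, j)) (Or.inl hu) (.cons (Or.inl hu.symm) .nil)
      exact dist_le p
    exact hlj.trans (hreach.one_lt_dist_of_ne_of_not_adj hne hnadj')
  · have hl' : l ∈ insert j (H.neighborSet j) := htwin ▸ Set.mem_insert_of_mem i hl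
    rcases hl' with rfl | hjl
    · simp
    · have hlj : (lexProd G H).Adj (u, l) (u, j) := Or.inr ⟨rfl, hjl.symm⟩
      exact (dist_eq_one_iff_adj.mpr hlj).le.trans hpos

theorem sdimf_lexProd_of_perm [Fintype V] [Fintype W] (hG : G.Preconnected)
    (hadj : ∀ u, ∃ w, G.Adj u w) (σ : Equiv.Perm W) (hσ : ∀ k, σ k ≠ k)
    (hσH : ∀ k, ¬ H.Adj k (σ k) ∨
      insert k (H.neighborSet k) = insert (σ k) (H.neighborSet (σ k))) :
    sdimf (lexProd G H) = Fintype.card V * Fintype.card W / 2 := by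
  rw [sdimf_eq_card_div_two (lexProd_preconnected hG hadj) ((Equiv.refl V).prodCongr σ),
    Fintype.card_prod, Nat.cast_mul]
  rintro ⟨u, k⟩
  obtain ⟨u₀, hu⟩ := hadj u
  refine ⟨fun h => hσ k (congrArg Prod.snd h).symm, maxDistFrom_lexProd hu (hσ k).symm (hσH k),
    maxDistFrom_lexProd hu (hσ k) ((hσH k).imp (fun h h' => h h'.symm) Eq.symm)⟩

end LexProd

lemma cycleGraph_not_adj_add_two (n : ℕ) (k : Fin (n + 4)) :
    ¬ (cycleGraph (n + 4)).Adj k (k + 2) := by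
  rw [cycleGraph_adj']
  simp [Fin.val_neg, Fin.ext_iff, Nat.mod_eq_of_lt (show 2 < n + 4 by omega)]

/-- Let `G` be a connected graph of order `n ≥ 2`. Then
(a) `sdim_f(G[K_m]) = nm/2` for `m ≥ 2`;
(b) `sdim_f(G[C_m]) = nm/2` for `m ≥ 3`;
(c) `sdim_f(G[P_m]) = nm/2` for `m ≥ 2`, `m ≠ 3`. -/
theorem sdimf_lexProd_complete_cycle_path {V : Type*} [Fintype V] (G : SimpleGraph V)
    (hG : G.Connected) (hn : 2 ≤ Fintype.card V) :
    (∀ m : ℕ, 2 ≤ m →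
      sdimf (lexProd G (⊤ : SimpleGraph (Fin m))) = (Fintype.card V : ℝ) * m / 2) ∧
    (∀ m : ℕ, 3 ≤ m →
      sdimf (lexProd G (SimpleGraph.cycleGraph m)) = (Fintype.card V : ℝ) * m / 2) ∧
    (∀ m : ℕ, 2 ≤ m → m ≠ 3 →
      sdimf (lexProd G (SimpleGraph.pathGraph m)) = (Fintype.card V : ℝ) * m / 2) := by
  have : Nontrivial V := Fintype.one_lt_card_iff_nontrivial.mp hn
  have hadj (u : V) : ∃ w, G.Adj u w := not_forall_not.mp (hG.preconnected.not_isIsolated u)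
  have hlex {m : ℕ} (H : SimpleGraph (Fin m)) (σ : Equiv.Perm (Fin m)) (hσ : ∀ k, σ k ≠ k)
      (hσH : ∀ k, ¬ H.Adj k (σ k) ∨
        insert k (H.neighborSet k) = insert (σ k) (H.neighborSet (σ k))) :
      sdimf (lexProd G H) = (Fintype.card V : ℝ) * m / 2 := by
    rw [sdimf_lexProd_of_perm hG.preconnected hadj σ hσ hσH, Fintype.card_fin]
  have hcomplete (m : ℕ) (hm : 2 ≤ m) :
      sdimf (lexProd G (⊤ : SimpleGraph (Fin m))) = (Fintype.card V : ℝ) * m / 2 := by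
    obtain ⟨n, rfl⟩ := Nat.exists_eq_add_of_le' hm
    refine hlex ⊤ (Equiv.addRight 1) (by simp) fun k => Or.inr ?_
    ext; simp [em]
  have hshift (n : ℕ) (k : Fin (n + 4)) : k + 2 ≠ k := by
    simp [Fin.ext_iff, Nat.mod_eq_of_lt (show 2 < n + 4 by omega)]
  refine ⟨hcomplete, fun m hm => ?_, fun m hm hm3 => ?_⟩
  · rcases (by omega : m = 3 ∨ 4 ≤ m) with rfl | hm4
    · rw [cycleGraph_three_eq_top]
      exact hcomplete 3 (by norm_num)
    obtain ⟨n, rfl⟩ := Nat.exists_eq_add_of_le' hm4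
    exact hlex _ (Equiv.addRight 2) (hshift n) fun k => Or.inl (cycleGraph_not_adj_add_two n k)
  · rcases (by omega : m = 2 ∨ 4 ≤ m) with rfl | hm4
    · rw [pathGraph_two_eq_top]
      exact hcomplete 2 le_rfl
    obtain ⟨n, rfl⟩ := Nat.exists_eq_add_of_le' hm4
    exact hlex _ (Equiv.addRight 2) (hshift n) fun k =>
      Or.inl fun h => cycleGraph_not_adj_add_two n k (pathGraph_le_cycleGraph h)
end

section
/- Let G be a connected graph of order at least 2 and let H be a graph. Then sdim_f(G[H]) ≥ m_1(G)·sl_f(H) + (m_2(G)/2)·sdim_f(K_2[H]) + (m_3(G)/2)·|V(H)|, where m_1(G), m_2(G), m_3(G) are the total numbers of vertices in equivalence classes of the twin relation ≡ of types 1, 2, 3 respectively. -/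
/-!
Fix a strong resolving function `g` of `G[H]` and let `g_u = ∑_w g (u, w)` be its weight on the
fibre `{u} × V(H)`. Since `G` is connected and nontrivial, `(a, b)` and `(c, d)` are at distance
`d_G(a, c)` when `a ≠ c`, and at distance `0`, `1` or `2` inside a fibre. If all vertices outside a
set `s ⊆ V(G)` are equidistant from the vertices of `s`, then `S{x, y}` stays inside `s × V(H)` for
`x, y ∈ s × V(H)`. With `s = {u}` this makes `w ↦ g (u, w)` a strong locating function of `H`, so
`g_u ≥ sl_f(H)`. For true twins `u, v` the two fibres form an isometric copy of `K₂[H]`, so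
`g_u + g_v ≥ sdim_f(K₂[H])`; for false twins, at distance `2`, the pair `(u, w), (v, w)` is resolved
only by itself, so `g_u + g_v ≥ |V(H)|`. In a twin class of size `k ≥ 2` these pairwise bounds add
up to `k / 2` times the bound, and the three types of classes partition `V(G)`.
-/

open SimpleGraph

open Function

section Counting

variable {α β : Type*}

lemma card_mul_le_two_mul_sum_of_pairwise (F : Finset α) (c : α → ℝ) (s : ℝ)
    (hF : ∀ u ∈ F, ∃ v ∈ F, v ≠ u) (h : ∀ u ∈ F, ∀ v ∈ F, u ≠ v → s ≤ c u + c v) :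
    F.card * s ≤ 2 * ∑ u ∈ F, c u := by
  classical
  rcases F.eq_empty_or_nonempty with rfl | ⟨u, hu⟩
  · simp
  obtain ⟨v, hv, hvu⟩ := hF u hu
  have hk : (1 : ℝ) < F.card := by exact_mod_cast Finset.one_lt_card.mpr ⟨u, hu, v, hv, hvu.symm⟩
  -- summing over ordered pairs of distinct elements gives `k (k - 1) s ≤ 2 (k - 1) ∑ c`
  have hpairs : ∑ u ∈ F, ∑ v ∈ F.erase u, s ≤ ∑ u ∈ F, ∑ v ∈ F.erase u, (c u + c v) :=
    Finset.sum_le_sum fun u hu => Finset.sum_le_sum fun v hv =>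
      h u hu v (Finset.mem_of_mem_erase hv) (Finset.ne_of_mem_erase hv).symm
  have hl : ∑ u ∈ F, ∑ v ∈ F.erase u, s = F.card * (F.card - 1) * s := by
    rw [Finset.sum_congr rfl fun u hu => Finset.sum_erase_eq_sub (f := fun _ => s) hu]
    simp only [Finset.sum_const, nsmul_eq_mul]
    ring
  have hr : ∑ u ∈ F, ∑ v ∈ F.erase u, (c u + c v) = 2 * (F.card - 1) * ∑ u ∈ F, c u := by
    rw [Finset.sum_congr rfl fun u hu => Finset.sum_erase_eq_sub (f := fun v => c u + c v) hu]
    simp only [Finset.sum_add_distrib, Finset.sum_sub_distrib, Finset.sum_const, nsmul_eq_mul,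
      ← Finset.mul_sum]
    ring
  have : ((F.card : ℝ) - 1) * (F.card * s) ≤ (F.card - 1) * (2 * ∑ u ∈ F, c u) := by
    rw [hl, hr] at hpairs
    linarith
  exact le_of_mul_le_mul_left this (by linarith)

lemma card_mul_le_two_mul_sum_of_fiberwise [DecidableEq β] (T : Finset α) (κ : α → β)
    (c : α → ℝ) (s : ℝ) (hT : ∀ u ∈ T, ∃ v ∈ T, v ≠ u ∧ κ v = κ u)
    (h : ∀ u ∈ T, ∀ v ∈ T, u ≠ v → κ u = κ v → s ≤ c u + c v) :
    T.card * s ≤ 2 * ∑ u ∈ T, c u := by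
  have hmaps : ∀ u ∈ T, κ u ∈ T.image κ := fun u hu => Finset.mem_image_of_mem κ hu
  rw [Finset.card_eq_sum_card_fiberwise hmaps, ← Finset.sum_fiberwise_of_maps_to hmaps c]
  push_cast
  rw [Finset.sum_mul, Finset.mul_sum]
  refine Finset.sum_le_sum fun b _ => card_mul_le_two_mul_sum_of_pairwise _ c s ?_ ?_
  · intro u hu
    rw [Finset.mem_filter] at hu
    obtain ⟨v, hv, hvu, hκ⟩ := hT u hu.1
    exact ⟨v, Finset.mem_filter.mpr ⟨hv, hκ.trans hu.2⟩, hvu⟩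
  · intro u hu v hv huv
    rw [Finset.mem_filter] at hu hv
    exact h u hu.1 v hv.1 huv (hu.2.trans hv.2.symm)

lemma ncard_setOf_eq_card_filter [Fintype α] (p : α → Prop) [DecidablePred p] :
    {a | p a}.ncard = (Finset.univ.filter p).card := by
  rw [← Set.ncard_coe_finset]
  simp

lemma sum_eq_sum_filter_add_sum_filter_add_sum_filter [Fintype α] (p q : α → Prop)
    [DecidablePred p] [DecidablePred q] (hpq : ∀ a, ¬ (p a ∧ q a)) (f : α → ℝ) :
    ∑ a, f a = ∑ a with p a, f a + ∑ a with q a, f a + ∑ a with ¬ p a ∧ ¬ q a, f a := by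
  rw [← Finset.sum_filter_add_sum_filter_not Finset.univ p,
    ← Finset.sum_filter_add_sum_filter_not (Finset.univ.filter fun a => ¬ p a) q,
    Finset.filter_filter, Finset.filter_filter, add_assoc]
  congr 3
  ext a
  simp only [Finset.mem_filter, Finset.mem_univ, true_and]
  exact ⟨And.right, fun hq => ⟨fun hp => hpq a ⟨hp, hq⟩, hq⟩⟩

end Counting

namespace SimpleGraph

section Metric

variable {α : Type*} {Γ : SimpleGraph α} {x y z : α}

lemma Sset_comm (x y : α) : Sset Γ x y = Sset Γ y x := by
  ext z
  exact or_comm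

lemma SLset_comm (b b' : α) : SLset Γ b b' = SLset Γ b' b := by
  rw [SLset, SLset, Set.union_comm, Sset_comm]

lemma dist_eq_two_of_adj_of_adj (hxy : Γ.Adj x y) (hyz : Γ.Adj y z) (hxz : x ≠ z)
    (hnxz : ¬ Γ.Adj x z) : Γ.dist x z = 2 := by
  have hle : Γ.dist x z ≤ 2 := dist_le (.cons hxy (.cons hyz .nil))
  have hne0 : Γ.dist x z ≠ 0 :=
    dist_ne_zero_iff_ne_and_reachable.mpr ⟨hxz, hxy.reachable.trans hyz.reachable⟩
  have hne1 : Γ.dist x z ≠ 1 := mt dist_eq_one_iff_adj.mp hnxz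
  omega

lemma exists_shortest_walk_mem_support_iff (hyx : Γ.Reachable y x) (hxz : Γ.Reachable x z) :
    (∃ p : Γ.Walk y z, p.length = Γ.dist y z ∧ x ∈ p.support) ↔
      Γ.dist y x + Γ.dist x z = Γ.dist y z := by
  classical
  constructor
  · rintro ⟨p, hp, hx⟩
    have hsplit := congrArg Walk.length (p.take_spec hx)
    rw [Walk.length_append] at hsplit
    have := dist_le (p.takeUntil x hx)
    have := dist_le (p.dropUntil x hx)
    have := hxz.dist_triangle_right y
    omega
  · intro h
    obtain ⟨q₁, hq₁⟩ := hyx.exists_walk_length_eq_dist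
    obtain ⟨q₂, hq₂⟩ := hxz.exists_walk_length_eq_dist
    exact ⟨q₁.append q₂, by rw [Walk.length_append, hq₁, hq₂, h], by simp⟩

lemma mem_Sset_iff (hΓ : Γ.Preconnected) : z ∈ Sset Γ x y ↔
    Γ.dist y x + Γ.dist x z = Γ.dist y z ∨ Γ.dist x y + Γ.dist y z = Γ.dist x z :=
  or_congr (exists_shortest_walk_mem_support_iff (hΓ y x) (hΓ x z))
    (exists_shortest_walk_mem_support_iff (hΓ x y) (hΓ y z))

lemma left_mem_Sset (hΓ : Γ.Preconnected) : x ∈ Sset Γ x y :=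
  (mem_Sset_iff hΓ).mpr (Or.inl (by simp))

lemma eq_or_eq_of_mem_Sset (hΓ : Γ.Preconnected) (hz : z ∈ Sset Γ x y)
    (hxz : Γ.dist x z ≤ Γ.dist x y) (hyz : Γ.dist y z ≤ Γ.dist x y) : z = x ∨ z = y := by
  have hyx : Γ.dist y x = Γ.dist x y := dist_comm
  rcases (mem_Sset_iff hΓ).mp hz with h | h
  · exact Or.inl ((hΓ x z).dist_eq_zero_iff.mp (by omega)).symm
  · exact Or.inr ((hΓ y z).dist_eq_zero_iff.mp (by omega)).symm

lemma mem_Sset_comp_iff {β : Type*} {Γ' : SimpleGraph β} (hΓ : Γ.Preconnected)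
    (hΓ' : Γ'.Preconnected) {φ : β → α} (hφ : ∀ x y, Γ.dist (φ x) (φ y) = Γ'.dist x y)
    {x y z : β} : φ z ∈ Sset Γ (φ x) (φ y) ↔ z ∈ Sset Γ' x y := by
  simp only [mem_Sset_iff hΓ, mem_Sset_iff hΓ', hφ]

lemma Sset_eq_empty_of_not_reachable (h : ¬ Γ.Reachable x y) : Sset Γ x y = ∅ := by
  classical
  ext z
  simp only [Set.mem_empty_iff_false, iff_false]
  rintro (⟨p, -, hx⟩ | ⟨p, -, hy⟩)
  · exact h ⟨(p.takeUntil x hx).reverse⟩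
  · exact h ⟨p.takeUntil y hy⟩

end Metric

section Twins

variable {V : Type*} {G : SimpleGraph V} {u v c : V}

lemma dist_le_dist_of_neighborSet_subset (hG : G.Connected)
    (h : G.neighborSet v ⊆ insert u (G.neighborSet u)) (hc : c ≠ v) :
    G.dist u c ≤ G.dist v c := by
  obtain ⟨p, hp⟩ := hG.exists_walk_length_eq_dist v c
  cases p with
  | nil => exact absurd rfl hc
  | cons hvn q =>
    rw [Walk.length_cons] at hp
    rcases h hvn with rfl | hun
    · have := dist_le q
      omega
    · have : G.dist u c ≤ q.length + 1 := dist_le (Walk.cons hun q)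
      omega

lemma dist_eq_dist_of_neighborSet_subset (hG : G.Connected)
    (huv : G.neighborSet u ⊆ insert v (G.neighborSet v))
    (hvu : G.neighborSet v ⊆ insert u (G.neighborSet u)) (hcu : c ≠ u) (hcv : c ≠ v) :
    G.dist u c = G.dist v c :=
  le_antisymm (dist_le_dist_of_neighborSet_subset hG hvu hcv)
    (dist_le_dist_of_neighborSet_subset hG huv hcu)

lemma neighborSet_subset_of_closedNbhd_eq
    (h : insert u (G.neighborSet u) = insert v (G.neighborSet v)) :
    G.neighborSet u ⊆ insert v (G.neighborSet v) :=
  h ▸ Set.subset_insert u _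

lemma adj_of_closedNbhd_eq (h : insert u (G.neighborSet u) = insert v (G.neighborSet v))
    (huv : u ≠ v) : G.Adj u v := by
  have hv : v ∈ insert u (G.neighborSet u) := h ▸ Set.mem_insert v _
  exact hv.resolve_left huv.symm

lemma not_adj_of_neighborSet_eq (h : G.neighborSet u = G.neighborSet v) : ¬ G.Adj u v := by
  intro huv
  have hv : v ∈ G.neighborSet v := h ▸ huv
  exact G.loopless.irrefl v hv

lemma dist_eq_two_of_neighborSet_eq [Nontrivial V] (hG : G.Preconnected)
    (h : G.neighborSet u = G.neighborSet v) (huv : u ≠ v) : G.dist u v = 2 := by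
  obtain ⟨n, hun⟩ := hG.exists_adj_of_nontrivial u
  have hvn : G.Adj v n := (h ▸ hun : n ∈ G.neighborSet v)
  exact dist_eq_two_of_adj_of_adj hun hvn.symm huv (not_adj_of_neighborSet_eq h)

lemma not_hasTrueTwin_and_hasFalseTwin (G : SimpleGraph V) (u : V) :
    ¬ (HasTrueTwin G u ∧ HasFalseTwin G u) := by
  rintro ⟨⟨v, hvu, hv⟩, ⟨w, hwu, hw⟩⟩
  have hwv : G.Adj w v := (hw ▸ (adj_of_closedNbhd_eq hv hvu).symm : v ∈ G.neighborSet w)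
  have hwu' : G.Adj u w := ((hv ▸ Set.mem_insert_of_mem v hwv.symm :
    w ∈ insert u (G.neighborSet u)).resolve_left hwu)
  exact not_adj_of_neighborSet_eq hw hwu'.symm

end Twins

section LexProd

variable {V W : Type*} {G : SimpleGraph V} {H : SimpleGraph W}

open Classical in
/-- The distance from `(a, b)` to `(a, d)` in `G[H]` for connected nontrivial `G`: a path may
leave the fibre through a neighbour of `a`, so it is at most `2`. -/
noncomputable def fiberDist (H : SimpleGraph W) (b d : W) : ℕ :=
  if b = d then 0 else if H.Adj b d then 1 else 2

lemma fiberDist_le_two (H : SimpleGraph W) (b d : W) : fiberDist H b d ≤ 2 := by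
  unfold fiberDist
  split_ifs <;> omega

lemma dist_fst_le_length (hG : G.Connected) {x z : V × W} (p : (lexProd G H).Walk x z) :
    G.dist x.1 z.1 ≤ p.length := by
  induction p with
  | nil => simp
  | @cons x m z h q ih =>
    rw [Walk.length_cons]
    rcases h with h | ⟨he, -⟩
    · have := hG.dist_triangle (u := x.1) (v := m.1) (w := z.1)
      have := dist_eq_one_iff_adj.mpr h
      omega
    · rw [he]
      omega

lemma lexProd_dist_of_ne (hG : G.Connected) {a c : V} (hac : a ≠ c) (b d : W) :
    (lexProd G H).dist (a, b) (c, d) = G.dist a c := by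
  obtain ⟨p, hp⟩ := hG.exists_walk_length_eq_dist a c
  cases p with
  | nil => exact absurd rfl hac
  | cons h q =>
    let ι : G →g lexProd G H := ⟨fun a => (a, d), Or.inl⟩
    let r : (lexProd G H).Walk (a, b) (c, d) := .cons (Or.inl h) (q.map ι)
    have hr : r.length = G.dist a c := by
      rw [← hp]
      exact congrArg (· + 1) (q.length_map ι)
    obtain ⟨s, hs⟩ := r.reachable.exists_walk_length_eq_dist
    exact le_antisymm (hr ▸ dist_le r) (hs ▸ dist_fst_le_length hG s)

lemma lexProd_dist_mk_left [Nontrivial V] (hG : G.Preconnected) (a : V) (b d : W) :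
    (lexProd G H).dist (a, b) (a, d) = fiberDist H b d := by
  obtain ⟨n, han⟩ := hG.exists_adj_of_nontrivial a
  have hadj : (lexProd G H).Adj (a, b) (a, d) ↔ H.Adj b d := by simp [lexProd]
  unfold fiberDist
  split_ifs with hbd hbd'
  · simp [hbd]
  · exact dist_eq_one_iff_adj.mpr (hadj.mpr hbd')
  · exact dist_eq_two_of_adj_of_adj (y := (n, b)) (Or.inl han) (Or.inl han.symm)
      (by simp [hbd]) (mt hadj.mp hbd')

lemma lexProd_preconnected [Nontrivial V] (hG : G.Connected) : (lexProd G H).Preconnected := by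
  rintro ⟨a, b⟩ ⟨c, d⟩
  by_cases hac : a = c
  · subst hac
    obtain ⟨n, han⟩ := hG.preconnected.exists_adj_of_nontrivial a
    exact ⟨.cons (Or.inl han : (lexProd G H).Adj _ (n, b)) (.cons (Or.inl han.symm) .nil)⟩
  · refine Reachable.of_dist_ne_zero ?_
    rw [lexProd_dist_of_ne hG hac]
    exact ((hG.preconnected a c).pos_dist_of_ne hac).ne'

/-- A vertex `z` outside `s × W` is equally far from `x` and `y`, so neither of them lies on a
shortest path from the other one to `z`. -/
lemma fst_mem_of_mem_Sset_lexProd [Nontrivial V] (hG : G.Connected) {s : Set V}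
    (hs : ∀ c ∉ s, ∀ a ∈ s, ∀ a' ∈ s, G.dist a c = G.dist a' c)
    {x y z : V × W} (hx : x.1 ∈ s) (hy : y.1 ∈ s) (hxy : x ≠ y)
    (hz : z ∈ Sset (lexProd G H) x y) : z.1 ∈ s := by
  by_contra hzs
  have hxz : (lexProd G H).dist x z = G.dist x.1 z.1 :=
    lexProd_dist_of_ne hG (ne_of_mem_of_not_mem hx hzs) _ _
  have hyz : (lexProd G H).dist y z = G.dist y.1 z.1 :=
    lexProd_dist_of_ne hG (ne_of_mem_of_not_mem hy hzs) _ _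
  have hpos := (lexProd_preconnected (H := H) hG x y).pos_dist_of_ne hxy
  have hcomm : (lexProd G H).dist y x = (lexProd G H).dist x y := dist_comm
  have := hs z.1 hzs x.1 hx y.1 hy
  rw [mem_Sset_iff (lexProd_preconnected hG)] at hz
  omega

lemma lexProd_dist_prodMap [Nontrivial V] (hG : G.Connected) {U : Type*} [Nontrivial U]
    {K : SimpleGraph U} (hK : K.Connected) {ι : U → V} (hι : Injective ι)
    (hd : ∀ i j, G.dist (ι i) (ι j) = K.dist i j) (x y : U × W) :
    (lexProd G H).dist (Prod.map ι id x) (Prod.map ι id y) = (lexProd K H).dist x y := by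
  obtain ⟨i, b⟩ := x
  obtain ⟨j, d⟩ := y
  by_cases hij : i = j
  · subst hij
    rw [Prod.map_apply, Prod.map_apply, lexProd_dist_mk_left hG.preconnected,
      lexProd_dist_mk_left hK.preconnected]
    rfl
  · rw [Prod.map_apply, Prod.map_apply, lexProd_dist_of_ne hG (hι.ne hij),
      lexProd_dist_of_ne hK hij, hd]

lemma Sset_lexProd_subset_image_prodMap [Nontrivial V] (hG : G.Connected) {U : Type*}
    [Nontrivial U] {K : SimpleGraph U} (hK : K.Connected) {ι : U → V} (hι : Injective ι)
    (hd : ∀ i j, G.dist (ι i) (ι j) = K.dist i j)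
    (hs : ∀ c ∉ Set.range ι, ∀ i j, G.dist (ι i) c = G.dist (ι j) c)
    {x y : U × W} (hxy : x ≠ y) :
    Sset (lexProd G H) (Prod.map ι id x) (Prod.map ι id y) ⊆
      Prod.map ι id '' Sset (lexProd K H) x y := by
  intro z hz
  obtain ⟨i, hi⟩ := fst_mem_of_mem_Sset_lexProd hG (s := Set.range ι)
    (by rintro c hc _ ⟨i, rfl⟩ _ ⟨j, rfl⟩; exact hs c hc i j) ⟨x.1, rfl⟩ ⟨y.1, rfl⟩
    ((hι.prodMap injective_id).ne hxy) hz
  have hz' : Prod.map ι id (i, z.2) = z := by simp [hi]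
  refine ⟨(i, z.2), ?_, hz'⟩
  rw [← mem_Sset_comp_iff (lexProd_preconnected hG) (lexProd_preconnected hK)
    (lexProd_dist_prodMap hG hK hι hd), hz']
  exact hz

lemma mem_SLset_of_fiberDist_add_eq (hH : H.Preconnected) {b b' d : W} (hbb' : b ≠ b')
    (h : fiberDist H b' b + fiberDist H b d = fiberDist H b' d) : d ∈ SLset H b b' := by
  by_cases hdb : d = b
  · subst hdb
    exact ⟨Or.inl (Set.mem_insert d _), left_mem_Sset hH⟩
  obtain ⟨hb'b, hbd, hb'd, hnb'd⟩ : H.Adj b' b ∧ H.Adj b d ∧ b' ≠ d ∧ ¬ H.Adj b' d := by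
    simp only [fiberDist, if_neg hbb'.symm, if_neg (Ne.symm hdb)] at h
    split_ifs at h <;> first | omega | exact ⟨‹_›, ‹_›, ‹_›, ‹_›⟩
  refine ⟨Or.inl (Set.mem_insert_of_mem b hbd),
    Or.inl ((exists_shortest_walk_mem_support_iff hb'b.reachable hbd.reachable).mpr ?_)⟩
  rw [dist_eq_one_iff_adj.mpr hb'b, dist_eq_one_iff_adj.mpr hbd,
    dist_eq_two_of_adj_of_adj hb'b hbd hb'd hnb'd]

lemma mem_SLset_of_mem_Sset_lexProd [Nontrivial V] (hG : G.Connected) (hH : H.Preconnected)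
    {a : V} {b b' d : W} (hbb' : b ≠ b') (hz : (a, d) ∈ Sset (lexProd G H) (a, b) (a, b')) :
    d ∈ SLset H b b' := by
  rw [mem_Sset_iff (lexProd_preconnected hG)] at hz
  simp only [lexProd_dist_mk_left hG.preconnected] at hz
  rcases hz with h | h
  · exact mem_SLset_of_fiberDist_add_eq hH hbb' h
  · rw [SLset_comm]
    exact mem_SLset_of_fiberDist_add_eq hH hbb'.symm h

end LexProd

section Fractional

variable {α β : Type*}

lemma finsum_mem_le_finsum_mem_of_subset [Finite α] {g : α → ℝ} (hg : ∀ a, 0 ≤ g a)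
    {S T : Set α} (h : S ⊆ T) : ∑ᶠ a ∈ S, g a ≤ ∑ᶠ a ∈ T, g a := by
  classical
  have := Fintype.ofFinite α
  rw [finsum_mem_eq_toFinset_sum, finsum_mem_eq_toFinset_sum]
  exact Finset.sum_le_sum_of_subset_of_nonneg (Set.toFinset_subset_toFinset.mpr h)
    fun a _ _ => hg a

lemma finsum_mem_le_finsum_mem_comp [Finite α] {g : α → ℝ} (hg : ∀ a, 0 ≤ g a)
    {φ : β → α} (hφ : Injective φ) {S : Set α} {T : Set β} (h : S ⊆ φ '' T) :
    ∑ᶠ a ∈ S, g a ≤ ∑ᶠ b ∈ T, g (φ b) :=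
  (finsum_mem_le_finsum_mem_of_subset hg h).trans_eq (finsum_mem_image hφ.injOn)

lemma isSRF_one [Finite α] {Γ : SimpleGraph α} (hΓ : Γ.Preconnected) : IsSRF Γ 1 := by
  refine ⟨fun _ => by norm_num, fun x y _ => ?_⟩
  calc (1 : ℝ) = ∑ᶠ z ∈ ({x} : Set α), (1 : α → ℝ) z := by simp
    _ ≤ ∑ᶠ z ∈ Sset Γ x y, (1 : α → ℝ) z :=
      finsum_mem_le_finsum_mem_of_subset (fun _ => zero_le_one)
        (Set.singleton_subset_iff.mpr (left_mem_Sset hΓ))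

lemma IsSRF.comp [Finite α] {Γ : SimpleGraph α} {Γ' : SimpleGraph β} {g : α → ℝ}
    (hg : IsSRF Γ g) {φ : β → α} (hφ : Injective φ)
    (h : ∀ x y, x ≠ y → Sset Γ (φ x) (φ y) ⊆ φ '' Sset Γ' x y) : IsSRF Γ' (g ∘ φ) :=
  ⟨fun b => hg.1 (φ b), fun x y hxy => (hg.2 _ _ (hφ.ne hxy)).trans
    (finsum_mem_le_finsum_mem_comp (fun a => (hg.1 a).1) hφ (h x y hxy))⟩

lemma IsSRF.isSLF_comp [Finite α] {Γ : SimpleGraph α} {H : SimpleGraph β} {g : α → ℝ}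
    (hg : IsSRF Γ g) {φ : β → α} (hφ : Injective φ)
    (h : ∀ x y, x ≠ y → Sset Γ (φ x) (φ y) ⊆ φ '' SLset H x y) : IsSLF H (g ∘ φ) :=
  ⟨fun b => hg.1 (φ b), fun x y hxy => (hg.2 _ _ (hφ.ne hxy)).trans
    (finsum_mem_le_finsum_mem_comp (fun a => (hg.1 a).1) hφ (h x y hxy))⟩

lemma sdimf_le_finsum_s15 {Γ : SimpleGraph α} {f : α → ℝ} (hf : IsSRF Γ f) :
    sdimf Γ ≤ ∑ᶠ a, f a :=
  csInf_le ⟨0, by rintro _ ⟨f, hf, rfl⟩; exact finsum_nonneg fun a => (hf.1 a).1⟩ ⟨f, hf, rfl⟩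

lemma slf_le_finsum {H : SimpleGraph β} {f : β → ℝ} (hf : IsSLF H f) :
    slf H ≤ ∑ᶠ b, f b :=
  csInf_le ⟨0, by rintro _ ⟨f, hf, rfl⟩; exact finsum_nonneg fun b => (hf.1 b).1⟩ ⟨f, hf, rfl⟩

/-- No strong locating function exists, and `sInf ∅ = 0`. -/
lemma slf_eq_zero_of_not_preconnected {H : SimpleGraph β} (hH : ¬ H.Preconnected) :
    slf H = 0 := by
  obtain ⟨b, b', hbb'⟩ : ∃ b b', ¬ H.Reachable b b' := by simpa [Preconnected] using hH
  have hne : b ≠ b' := by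
    rintro rfl
    exact hbb' (Reachable.refl b)
  have hSL : SLset H b b' = ∅ := by
    rw [SLset, Sset_eq_empty_of_not_reachable hbb', Set.inter_empty]
  suffices h : ∀ f, ¬ IsSLF H f by simp [slf, h]
  intro f hf
  have := hf.2 b b' hne
  rw [hSL, finsum_mem_empty] at this
  linarith

end Fractional

section ColumnBounds

variable {V W : Type*} [Fintype V] [Fintype W] [Nontrivial V] {G : SimpleGraph V}
  {H : SimpleGraph W} {g : V × W → ℝ}

lemma slf_le_sum_fiber (hG : G.Connected) (hg : IsSRF (lexProd G H) g) (a : V) :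
    slf H ≤ ∑ w, g (a, w) := by
  by_cases hH : H.Preconnected
  · have hS : ∀ b b', b ≠ b' →
        Sset (lexProd G H) (a, b) (a, b') ⊆ Prod.mk a '' SLset H b b' := by
      rintro b b' hbb' ⟨c, d⟩ hz
      obtain rfl : c = a := fst_mem_of_mem_Sset_lexProd hG (s := {a}) (by simp)
        (Set.mem_singleton a) (Set.mem_singleton a)
        (by simpa using hbb') hz
      exact ⟨d, mem_SLset_of_mem_Sset_lexProd hG hH hbb' hz, rfl⟩
    have := slf_le_finsum (hg.isSLF_comp (Prod.mk_right_injective a) hS)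
    rwa [finsum_eq_sum_of_fintype] at this
  · rw [slf_eq_zero_of_not_preconnected hH]
    exact Finset.sum_nonneg fun w _ => (hg.1 _).1

lemma sdimf_lexProd_top_le_sum_add_sum (hG : G.Connected) (hg : IsSRF (lexProd G H) g)
    {u v : V} (huv : u ≠ v) (h : insert u (G.neighborSet u) = insert v (G.neighborSet v)) :
    sdimf (lexProd (⊤ : SimpleGraph (Fin 2)) H) ≤ ∑ w, g (u, w) + ∑ w, g (v, w) := by
  set ι : Fin 2 → V := ![u, v]
  have hι : Injective ι := by
    intro i j hij
    fin_cases i <;> fin_cases j <;> simp_all [ι, eq_comm]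
  have hadj := adj_of_closedNbhd_eq h huv
  have hd : ∀ i j, G.dist (ι i) (ι j) = (⊤ : SimpleGraph (Fin 2)).dist i j := by
    intro i j
    fin_cases i <;> fin_cases j <;>
      simp [ι, dist_eq_one_iff_adj.mpr hadj, dist_eq_one_iff_adj.mpr hadj.symm, dist_top_of_ne]
  have hs : ∀ c ∉ Set.range ι, ∀ i j, G.dist (ι i) c = G.dist (ι j) c := by
    intro c hc i j
    have hcu : c ≠ u := fun hcu => hc ⟨0, hcu.symm⟩
    have hcv : c ≠ v := fun hcv => hc ⟨1, hcv.symm⟩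
    have := dist_eq_dist_of_neighborSet_subset hG (neighborSet_subset_of_closedNbhd_eq h)
      (neighborSet_subset_of_closedNbhd_eq h.symm) hcu hcv
    fin_cases i <;> fin_cases j <;> simp [ι, this]
  have := sdimf_le_finsum_s15 (hg.comp (hι.prodMap injective_id) fun x y hxy =>
    Sset_lexProd_subset_image_prodMap hG connected_top hι hd hs hxy)
  rwa [finsum_eq_sum_of_fintype, Fintype.sum_prod_type, Fin.sum_univ_two] at this

lemma card_le_sum_add_sum_of_neighborSet_eq (hG : G.Connected) (hg : IsSRF (lexProd G H) g)
    {u v : V} (huv : u ≠ v) (h : G.neighborSet u = G.neighborSet v) :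
    (Fintype.card W : ℝ) ≤ ∑ w, g (u, w) + ∑ w, g (v, w) := by
  have hd2 := dist_eq_two_of_neighborSet_eq hG.preconnected h huv
  have hs : ∀ c ∉ ({u, v} : Set V), ∀ a ∈ ({u, v} : Set V), ∀ a' ∈ ({u, v} : Set V),
      G.dist a c = G.dist a' c := by
    intro c hc
    simp only [Set.mem_insert_iff, Set.mem_singleton_iff, not_or] at hc ⊢
    have heq : G.dist u c = G.dist v c := dist_eq_dist_of_neighborSet_subset hG
      (by rw [h]; exact Set.subset_insert v _) (by rw [← h]; exact Set.subset_insert u _)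
      hc.1 hc.2
    rintro a (rfl | rfl) a' (rfl | rfl) <;> simp [heq]
  have hle : ∀ a ∈ ({u, v} : Set V), ∀ c ∈ ({u, v} : Set V), ∀ b d : W,
      (lexProd G H).dist (a, b) (c, d) ≤ 2 := by
    intro a ha c hc b d
    by_cases hac : a = c
    · rw [hac, lexProd_dist_mk_left hG.preconnected]
      exact fiberDist_le_two H b d
    · rw [lexProd_dist_of_ne hG hac]
      simp only [Set.mem_insert_iff, Set.mem_singleton_iff] at ha hc
      rcases ha with rfl | rfl <;> rcases hc with rfl | rfl <;> simp_all [dist_comm]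
  have hpair : ∀ w, Sset (lexProd G H) (u, w) (v, w) ⊆ {(u, w), (v, w)} := by
    rintro w ⟨c, d⟩ hz
    have hc := fst_mem_of_mem_Sset_lexProd hG hs (by simp) (by simp) (by simp [huv]) hz
    have hxy : (lexProd G H).dist (u, w) (v, w) = 2 := (lexProd_dist_of_ne hG huv w w).trans hd2
    exact eq_or_eq_of_mem_Sset (lexProd_preconnected hG) hz
      (hxy ▸ hle u (by simp) c hc w d) (hxy ▸ hle v (by simp) c hc w d)
  calc (Fintype.card W : ℝ) = ∑ _w : W, (1 : ℝ) := by simp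
    _ ≤ ∑ w, (g (u, w) + g (v, w)) := Finset.sum_le_sum fun w _ =>
        (hg.2 _ _ (by simp [huv])).trans
          ((finsum_mem_le_finsum_mem_of_subset (fun a => (hg.1 a).1) (hpair w)).trans_eq
            (finsum_mem_pair (by simp [huv])))
    _ = _ := Finset.sum_add_distrib

end ColumnBounds

end SimpleGraph

/-- Let `G` be connected of order at least 2 and `H` a graph. Then
`sdim_f(G[H]) ≥ m₁(G)·sl_f(H) + (m₂(G)/2)·sdim_f(K₂[H]) + (m₃(G)/2)·|V(H)|`. -/
theorem sdimf_lexProd_twin_lower_bound {V W : Type*} [Fintype V] [Fintype W]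
    (G : SimpleGraph V) (H : SimpleGraph W)
    (hG : G.Connected) (hn : 2 ≤ Fintype.card V) :
    (m1 G : ℝ) * slf H
      + (m2 G : ℝ) / 2 * sdimf (lexProd (⊤ : SimpleGraph (Fin 2)) H)
      + (m3 G : ℝ) / 2 * (Fintype.card W : ℝ)
    ≤ sdimf (lexProd G H) := by
  classical
  have : Nontrivial V := Fintype.one_lt_card_iff_nontrivial.mp hn
  refine le_csInf ⟨_, 1, isSRF_one (lexProd_preconnected hG), rfl⟩ ?_
  rintro _ ⟨g, hg, rfl⟩
  set col : V → ℝ := fun u => ∑ w, g (u, w)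
  have hO : (m1 G : ℝ) * slf H ≤ ∑ u with ¬ HasTrueTwin G u ∧ ¬ HasFalseTwin G u, col u := by
    rw [m1, ncard_setOf_eq_card_filter, ← nsmul_eq_mul]
    exact Finset.card_nsmul_le_sum _ col _ fun u _ => slf_le_sum_fiber hG hg u
  have hT : (m2 G : ℝ) * sdimf (lexProd (⊤ : SimpleGraph (Fin 2)) H)
      ≤ 2 * ∑ u with HasTrueTwin G u, col u := by
    rw [m2, ncard_setOf_eq_card_filter]
    refine card_mul_le_two_mul_sum_of_fiberwise _ (fun u => insert u (G.neighborSet u)) col _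
      (fun u hu => ?_) fun u _ v _ huv hκ => sdimf_lexProd_top_le_sum_add_sum hG hg huv hκ
    obtain ⟨v, hvu, hv⟩ := (Finset.mem_filter.mp hu).2
    exact ⟨v, Finset.mem_filter.mpr ⟨Finset.mem_univ v, u, hvu.symm, hv.symm⟩, hvu, hv⟩
  have hF : (m3 G : ℝ) * (Fintype.card W : ℝ) ≤ 2 * ∑ u with HasFalseTwin G u, col u := by
    rw [m3, ncard_setOf_eq_card_filter]
    refine card_mul_le_two_mul_sum_of_fiberwise _ G.neighborSet col _
      (fun u hu => ?_) fun u _ v _ huv hκ => card_le_sum_add_sum_of_neighborSet_eq hG hg huv hκ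
    obtain ⟨v, hvu, hv⟩ := (Finset.mem_filter.mp hu).2
    exact ⟨v, Finset.mem_filter.mpr ⟨Finset.mem_univ v, u, hvu.symm, hv.symm⟩, hvu, hv⟩
  have hsum : ∑ᶠ z, g z = ∑ u, col u := by
    rw [finsum_eq_sum_of_fintype, Fintype.sum_prod_type]
  rw [hsum, sum_eq_sum_filter_add_sum_filter_add_sum_filter _ _
    (not_hasTrueTwin_and_hasFalseTwin G) col]
  linarith
end
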